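/- For all x, y > 0, ln G⋆(x,y) ≤ ((x-y)/2)² · ζ(2, 1+√(xy)). -/

import Mathlib

/-!
By Euler's limit formula, `G⋆(x, y)` is the infinite product over `k ≥ 1` of
`(k + (x + y)/2)² / ((k + x)(k + y)) = 1 + ((x - y)/2)² / ((k + x)(k + y))`.
Since `log (1 + u) ≤ u` and `(k + x)(k + y) ≥ (k + √(xy))²` (AM-GM), the logarithm of the
`k`-th factor is at most `((x - y)/2)² / (k + √(xy))²`, whose sum over `k` is the right-hand side.
-/

open Filter Finset Real Topology

lemma add_sqrt_mul_sq_le_mul {x y t : ℝ} (hx : 0 ≤ x) (hy : 0 ≤ y) (ht : 0 ≤ t) :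
    (t + √(x * y)) ^ 2 ≤ (t + x) * (t + y) := by
  have hsq : √(x * y) ^ 2 = x * y := sq_sqrt (mul_nonneg hx hy)
  have amgm : 2 * √(x * y) ≤ x + y := by
    nlinarith [sq_nonneg (√x - √y), sq_sqrt hx, sq_sqrt hy, sqrt_mul hx y]
  nlinarith

lemma log_sq_div_mul_le {x y t : ℝ} (hx : 0 ≤ x) (hy : 0 ≤ y) (ht : 0 < t) :
    log ((t + (x + y) / 2) ^ 2 / ((t + x) * (t + y))) ≤
      ((x - y) / 2) ^ 2 * (1 / (t + √(x * y)) ^ 2) := by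
  have hsplit : (t + (x + y) / 2) ^ 2 / ((t + x) * (t + y)) =
      1 + ((x - y) / 2) ^ 2 / ((t + x) * (t + y)) := by
    field_simp
    ring
  calc log ((t + (x + y) / 2) ^ 2 / ((t + x) * (t + y)))
      ≤ ((x - y) / 2) ^ 2 / ((t + x) * (t + y)) := by
        rw [hsplit]
        linarith [log_le_sub_one_of_pos (by positivity :
          0 < 1 + ((x - y) / 2) ^ 2 / ((t + x) * (t + y)))]
    _ ≤ ((x - y) / 2) ^ 2 / (t + √(x * y)) ^ 2 :=
        div_le_div_of_nonneg_left (by positivity) (by positivity)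
          (add_sqrt_mul_sq_le_mul hx hy ht.le)
    _ = ((x - y) / 2) ^ 2 * (1 / (t + √(x * y)) ^ 2) := by ring

lemma summable_one_div_nat_add_sq (a : ℝ) : Summable fun n : ℕ ↦ 1 / ((n : ℝ) + a) ^ 2 :=
  ((summable_one_div_nat_add_rpow a 2).mpr one_lt_two).congr fun n ↦ by
    rw [rpow_two, sq_abs]

lemma GammaSeq_mul_GammaSeq_div_sq {a b c : ℝ} (ha : 0 < a) (hb : 0 < b) (hc : a + b = 2 * c)
    {n : ℕ} (hn : 0 < n) :
    GammaSeq a n * GammaSeq b n / GammaSeq c n ^ 2 =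
      ∏ j ∈ range (n + 1), (c + j) ^ 2 / ((a + j) * (b + j)) := by
  have hn' : (0 : ℝ) < n := by exact_mod_cast hn
  have hpow : (n : ℝ) ^ a * (n : ℝ) ^ b = ((n : ℝ) ^ c) ^ 2 := by
    rw [← rpow_add hn', ← rpow_natCast, ← rpow_mul hn'.le, hc]
    norm_num [mul_comm]
  have hA : ∏ j ∈ range (n + 1), (a + j) ≠ 0 := prod_ne_zero_iff.mpr fun j _ ↦ by positivity
  have hB : ∏ j ∈ range (n + 1), (b + j) ≠ 0 := prod_ne_zero_iff.mpr fun j _ ↦ by positivity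
  have hC : ∏ j ∈ range (n + 1), (c + j) ≠ 0 := prod_ne_zero_iff.mpr fun j _ ↦ by
    have : 0 < c := by linarith
    positivity
  rw [prod_div_distrib, prod_mul_distrib, prod_pow]
  simp only [GammaSeq]
  field_simp
  rw [hpow]

theorem tendsto_prod_sq_div_mul_Gamma {a b c : ℝ} (ha : 0 < a) (hb : 0 < b)
    (hc : a + b = 2 * c) :
    Tendsto (fun n : ℕ ↦ ∏ j ∈ range (n + 1), (c + j) ^ 2 / ((a + j) * (b + j))) atTop
      (𝓝 (Gamma a * Gamma b / Gamma c ^ 2)) := by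
  have hΓc : Gamma c ^ 2 ≠ 0 := pow_ne_zero 2 (Gamma_pos_of_pos (by linarith)).ne'
  refine (((GammaSeq_tendsto_Gamma a).mul (GammaSeq_tendsto_Gamma b)).div
    ((GammaSeq_tendsto_Gamma c).pow 2) hΓc).congr' ?_
  filter_upwards [eventually_gt_atTop 0] with n hn
  exact GammaSeq_mul_GammaSeq_div_sq ha hb hc hn

lemma log_prod_sq_div_mul_le {x y : ℝ} (hx : 0 ≤ x) (hy : 0 ≤ y) (n : ℕ) :
    log (∏ j ∈ range (n + 1), (1 + (x + y) / 2 + j) ^ 2 / ((1 + x + j) * (1 + y + j))) ≤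
      ((x - y) / 2) ^ 2 * ∑' k : ℕ, 1 / ((k : ℝ) + (1 + √(x * y))) ^ 2 := by
  rw [log_prod fun j _ ↦ by positivity, ← tsum_mul_left]
  refine (sum_le_sum fun j _ ↦ ?_).trans
    (((summable_one_div_nat_add_sq _).mul_left _).sum_le_tsum _ fun k _ ↦ by positivity)
  have key := log_sq_div_mul_le hx hy (by positivity : (0 : ℝ) < 1 + j)
  ring_nf at key ⊢
  exact key

theorem log_gurland_star_upper_bound (x y : ℝ) (hx : 0 < x) (hy : 0 < y) :
    Real.log (Real.Gamma (1 + x) * Real.Gamma (1 + y) /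
        (Real.Gamma (1 + (x + y) / 2)) ^ 2) ≤
      ((x - y) / 2) ^ 2 * (∑' n : ℕ, 1 / ((n : ℝ) + (1 + Real.sqrt (x * y))) ^ 2) := by
  have hratio : Gamma (1 + x) * Gamma (1 + y) / Gamma (1 + (x + y) / 2) ^ 2 ≠ 0 := by
    have := Gamma_pos_of_pos (by linarith : (0 : ℝ) < 1 + x)
    have := Gamma_pos_of_pos (by linarith : (0 : ℝ) < 1 + y)
    have := Gamma_pos_of_pos (by positivity : (0 : ℝ) < 1 + (x + y) / 2)
    positivity
  have hlim := (tendsto_prod_sq_div_mul_Gamma (by linarith : (0 : ℝ) < 1 + x)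
    (by linarith : (0 : ℝ) < 1 + y) (c := 1 + (x + y) / 2) (by ring)).log hratio
  exact le_of_tendsto' hlim (log_prod_sq_div_mul_le hx.le hy.le)
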